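/- Laplacian of the right slice kernel, first step (quaternionic case): for fixed s ∈ ℍ and x ∈ ℍ with s² − 2Re(x)s + |x|² ≠ 0, define S_R(s,x) = (s² − 2Re(x)s + |x|²)^{-1}(s − x̄). Then the four-dimensional Laplacian in x satisfies Δ S_R(s,x) = −4 (s² − 2Re(x)s + |x|²)^{-2}(s − x̄). -/

import Mathlib

open Quaternion

/-- The second directional derivative of `f : ℍ → ℍ` at `q` in the direction `d`,
i.e. `d²/dt² f(q + t d)` at `t = 0`. -/
noncomputable def dir2 (f : Quaternion ℝ → Quaternion ℝ) (d q : Quaternion ℝ) : Quaternion ℝ :=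
  deriv (fun t : ℝ => deriv (fun u : ℝ => f (q + u • d)) t) 0

/-- The right slice kernel `S_R(s,x) = (s² - 2Re(x)s + |x|²)⁻¹ (s - x̄)`. -/
noncomputable def SRkernel (s y : Quaternion ℝ) : Quaternion ℝ :=
  (s * s - ((2 * y.re : ℝ) : Quaternion ℝ) * s +
    ((Quaternion.normSq y : ℝ) : Quaternion ℝ))⁻¹ * (s - star y)

/-!
Along a unit direction `d`, the denominator `Q(x) = s² - 2 Re(x) s + |x|²` of the kernel is a
quadratic polynomial `Q(x + u d) = Q(x) + u L_d + u²` whose linear coefficient `L_d` commutes with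
`Q(x)`, while the numerator `s - x̄ - u d̄` is affine in `u`. Differentiating
`(Q + u L + u²)⁻¹ (E + u F)` twice gives
`∂_d² S_R = 2 (L_d² Q⁻³ - Q⁻²)(s - x̄) + 2 Q⁻² L_d d̄`.
Summing over `d = 1, i, j, k` and using `∑ L_d² = 4 Q` and `∑ L_d d̄ = -2 (s - x̄)` leaves
`8 Q⁻² (s - x̄) - 8 Q⁻² (s - x̄) - 4 Q⁻² (s - x̄)`.
-/

open Topology

section NormedDivisionRing

variable {R : Type*} [NormedDivisionRing R] [NormedAlgebra ℝ R]

theorem HasDerivAt.inv' {f : ℝ → R} {f' : R} {t : ℝ} (hf : HasDerivAt f f' t) (hft : f t ≠ 0) :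
    HasDerivAt (fun u => (f u)⁻¹) (-((f t)⁻¹ * f' * (f t)⁻¹)) t := by
  simpa [Function.comp_def] using (hasFDerivAt_inv' (𝕜 := ℝ) hft).comp_hasDerivAt t hf

theorem hasDerivAt_quadratic (A B C : R) (t : ℝ) :
    HasDerivAt (fun u : ℝ => A + u • B + u ^ 2 • C) (B + (2 * t) • C) t := by
  simpa using (((hasDerivAt_id t).smul_const B).const_add A).fun_add
    ((hasDerivAt_pow 2 t).smul_const C)

theorem hasDerivAt_affine (E F : R) (t : ℝ) : HasDerivAt (fun u : ℝ => E + u • F) F t := by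
  simpa using ((hasDerivAt_id t).smul_const F).const_add E

theorem deriv_deriv_inv_quadratic_mul_affine {A B C E F : R} (hA : A ≠ 0) :
    deriv (fun t : ℝ => deriv (fun u : ℝ => (A + u • B + u ^ 2 • C)⁻¹ * (E + u • F)) t) 0 =
      2 * (A⁻¹ * B * A⁻¹ * B * A⁻¹ - A⁻¹ * C * A⁻¹) * E - 2 * (A⁻¹ * B * A⁻¹) * F := by
  set M : ℝ → R := fun u => A + u • B + u ^ 2 • C
  have hM (t : ℝ) : HasDerivAt M (B + (2 * t) • C) t := hasDerivAt_quadratic A B C t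
  have hM0 : M 0 ≠ 0 := by simpa [M] using hA
  have hderiv : deriv (fun u => (M u)⁻¹ * (E + u • F)) =ᶠ[𝓝 0]
      fun t => -((M t)⁻¹ * (B + (2 * t) • C) * (M t)⁻¹) * (E + t • F) + (M t)⁻¹ * F := by
    filter_upwards [(hM 0).continuousAt.eventually_ne hM0] with t ht
    exact (((hM t).inv' ht).mul (hasDerivAt_affine E F t)).deriv
  have hinv := (hM 0).inv' hM0
  have hlin : HasDerivAt (fun t : ℝ => B + (2 * t) • C) ((2 : ℝ) • C) 0 := by
    simpa using (((hasDerivAt_id (0 : ℝ)).const_mul 2).smul_const C).const_add B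
  have hsecond := (((hinv.fun_mul hlin).fun_mul hinv).fun_neg.fun_mul
    (hasDerivAt_affine E F 0)).fun_add (hinv.mul_const F)
  rw [hderiv.deriv_eq, hsecond.deriv]
  simp only [M, zero_smul, add_zero, ne_eq, OfNat.ofNat_ne_zero, not_false_eq_true, zero_pow,
    mul_zero, neg_mul, two_smul, mul_neg, neg_add_rev, neg_neg]
  noncomm_ring

end NormedDivisionRing

@[simp, norm_cast]
theorem Quaternion.coe_ofNat {R : Type*} [CommRing R] (n : ℕ) [n.AtLeastTwo] :
    ((ofNat(n) : R) : ℍ[R]) = ofNat(n) :=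
  rfl

noncomputable def sliceQuadratic (s x : ℍ[ℝ]) : ℍ[ℝ] :=
  s * s - ((2 * x.re : ℝ) : ℍ[ℝ]) * s + ((normSq x : ℝ) : ℍ[ℝ])

noncomputable def sliceQuadraticLin (s x d : ℍ[ℝ]) : ℍ[ℝ] :=
  ((2 * (x * star d).re : ℝ) : ℍ[ℝ]) - ((2 * d.re : ℝ) : ℍ[ℝ]) * s

theorem sliceQuadratic_add_smul (s x d : ℍ[ℝ]) (u : ℝ) :
    sliceQuadratic s (x + u • d) =
      sliceQuadratic s x + u • sliceQuadraticLin s x d + u ^ 2 • ((normSq d : ℝ) : ℍ[ℝ]) := by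
  simp only [sliceQuadratic, sliceQuadraticLin, normSq_add, normSq_smul, re_add, re_smul,
    Quaternion.star_smul, mul_smul_comm, smul_eq_mul]
  simp only [← coe_mul_eq_smul]
  push_cast
  noncomm_ring

theorem commute_sliceQuadratic_inv_sliceQuadraticLin (s x d : ℍ[ℝ]) :
    Commute (sliceQuadratic s x)⁻¹ (sliceQuadraticLin s x d) := by
  have hs : Commute (sliceQuadratic s x) s :=
    (((Commute.refl s).mul_left (Commute.refl s)).sub_left
      ((coe_commute _ s).mul_left (Commute.refl s))).add_left (coe_commute _ s)
  exact (coe_commute _ _).symm.sub_right ((coe_commute _ _).symm.mul_right hs.inv_left₀)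

theorem dir2_SRkernel {s x d : ℍ[ℝ]} (hx : sliceQuadratic s x ≠ 0) (hd : normSq d = 1) :
    dir2 (SRkernel s) d x =
      2 * (sliceQuadraticLin s x d ^ 2 * (sliceQuadratic s x)⁻¹ ^ 3
          - (sliceQuadratic s x)⁻¹ ^ 2) * (s - star x)
        + 2 * (sliceQuadratic s x)⁻¹ ^ 2 * sliceQuadraticLin s x d * star d := by
  have hkernel : (fun u : ℝ => SRkernel s (x + u • d)) = fun u =>
      (sliceQuadratic s x + u • sliceQuadraticLin s x d + u ^ 2 • ((normSq d : ℝ) : ℍ[ℝ]))⁻¹ *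
        ((s - star x) + u • -star d) := by
    funext u
    rw [← sliceQuadratic_add_smul]
    simp only [SRkernel, sliceQuadratic, smul_neg, ← sub_eq_add_neg, star_add, Quaternion.star_smul,
      sub_add_eq_sub_sub]
  rw [dir2, hkernel, deriv_deriv_inv_quadratic_mul_affine hx, hd, coe_one]
  set P := (sliceQuadratic s x)⁻¹
  set L := sliceQuadraticLin s x d
  have hc : Commute P L := commute_sliceQuadratic_inv_sliceQuadraticLin s x d
  have e1 : P * L * P * L * P = L ^ 2 * P ^ 3 := by
    simp only [pow_succ, pow_zero, one_mul, mul_assoc, hc.left_comm, hc.eq]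
  have e3 : P * L * P = P ^ 2 * L := by
    rw [mul_assoc, ← hc.eq, ← mul_assoc, sq]
  rw [e1, e3]
  noncomm_ring

/- The basis vectors enter as variables: the anonymous constructor `⟨0, 1, 0, 0⟩` elaborates at type
`QuaternionAlgebra ℝ (-1) 0 (-1)`, on which the `ℍ[ℝ]` simp lemmas such as `re_star` do not fire. -/
theorem sum_sliceQuadraticLin_sq (s x i j k : ℍ[ℝ]) (hi : i = ⟨0, 1, 0, 0⟩)
    (hj : j = ⟨0, 0, 1, 0⟩) (hk : k = ⟨0, 0, 0, 1⟩) :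
    sliceQuadraticLin s x 1 ^ 2 + sliceQuadraticLin s x i ^ 2 + sliceQuadraticLin s x j ^ 2 +
        sliceQuadraticLin s x k ^ 2 = 4 * sliceQuadratic s x := by
  obtain ⟨hi₀, hi₁, hi₂, hi₃⟩ := Quaternion.ext_iff.mp hi
  obtain ⟨hj₀, hj₁, hj₂, hj₃⟩ := Quaternion.ext_iff.mp hj
  obtain ⟨hk₀, hk₁, hk₂, hk₃⟩ := Quaternion.ext_iff.mp hk
  clear hi hj hk
  ext <;> simp [sliceQuadraticLin, sliceQuadratic, normSq_def', sq, ← Quaternion.coe_ofNat, *] <;> ring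

theorem sum_sliceQuadraticLin_mul_star (s x i j k : ℍ[ℝ]) (hi : i = ⟨0, 1, 0, 0⟩)
    (hj : j = ⟨0, 0, 1, 0⟩) (hk : k = ⟨0, 0, 0, 1⟩) :
    sliceQuadraticLin s x 1 * star 1 + sliceQuadraticLin s x i * star i +
        sliceQuadraticLin s x j * star j + sliceQuadraticLin s x k * star k =
      -2 * (s - star x) := by
  obtain ⟨hi₀, hi₁, hi₂, hi₃⟩ := Quaternion.ext_iff.mp hi
  obtain ⟨hj₀, hj₁, hj₂, hj₃⟩ := Quaternion.ext_iff.mp hj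
  obtain ⟨hk₀, hk₁, hk₂, hk₃⟩ := Quaternion.ext_iff.mp hk
  clear hi hj hk
  ext <;> simp [sliceQuadraticLin, ← Quaternion.coe_ofNat, *] <;> ring

theorem sum_four_directions_eq {R : Type*} [Ring R] {Q P E L₀ L₁ L₂ L₃ D₀ D₁ D₂ D₃ : R}
    (hQP : Q * P = 1) (hsq : L₀ ^ 2 + L₁ ^ 2 + L₂ ^ 2 + L₃ ^ 2 = 4 * Q)
    (hD : L₀ * D₀ + L₁ * D₁ + L₂ * D₂ + L₃ * D₃ = -2 * E) :
    2 * (L₀ ^ 2 * P ^ 3 - P ^ 2) * E + 2 * P ^ 2 * L₀ * D₀ +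
        (2 * (L₁ ^ 2 * P ^ 3 - P ^ 2) * E + 2 * P ^ 2 * L₁ * D₁) +
        (2 * (L₂ ^ 2 * P ^ 3 - P ^ 2) * E + 2 * P ^ 2 * L₂ * D₂) +
        (2 * (L₃ ^ 2 * P ^ 3 - P ^ 2) * E + 2 * P ^ 2 * L₃ * D₃) =
      -4 * P ^ 2 * E := by
  have hQP3 : Q * P ^ 3 = P ^ 2 := by rw [pow_succ', ← mul_assoc, hQP, one_mul]
  calc _ = 2 * (L₀ ^ 2 + L₁ ^ 2 + L₂ ^ 2 + L₃ ^ 2) * P ^ 3 * E - 8 * P ^ 2 * E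
        + 2 * P ^ 2 * (L₀ * D₀ + L₁ * D₁ + L₂ * D₂ + L₃ * D₃) := by noncomm_ring
    _ = 8 * (Q * P ^ 3) * E - 12 * P ^ 2 * E := by rw [hsq, hD]; noncomm_ring
    _ = -4 * P ^ 2 * E := by rw [hQP3]; noncomm_ring

/-- Laplacian of the right slice kernel (quaternionic case, `h = 1`, `n = 3`): wherever
`s² - 2Re(x)s + |x|²` is nonzero,
`Δ S_R(s,x) = -4 (s² - 2Re(x)s + |x|²)⁻² (s - x̄)`. -/
theorem laplacian_right_slice_kernel (s x : Quaternion ℝ)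
    (h : s * s - ((2 * x.re : ℝ) : Quaternion ℝ) * s +
      ((Quaternion.normSq x : ℝ) : Quaternion ℝ) ≠ 0) :
    dir2 (SRkernel s) 1 x +
      dir2 (SRkernel s) (⟨0, 1, 0, 0⟩ : Quaternion ℝ) x +
      dir2 (SRkernel s) (⟨0, 0, 1, 0⟩ : Quaternion ℝ) x +
      dir2 (SRkernel s) (⟨0, 0, 0, 1⟩ : Quaternion ℝ) x =
    -4 * ((s * s - ((2 * x.re : ℝ) : Quaternion ℝ) * s +
      ((Quaternion.normSq x : ℝ) : Quaternion ℝ))⁻¹) ^ 2 * (s - star x) := by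
  change _ = -4 * (sliceQuadratic s x)⁻¹ ^ 2 * (s - star x)
  replace h : sliceQuadratic s x ≠ 0 := h
  set i : ℍ[ℝ] := ⟨0, 1, 0, 0⟩ with hi
  set j : ℍ[ℝ] := ⟨0, 0, 1, 0⟩ with hj
  set k : ℍ[ℝ] := ⟨0, 0, 0, 1⟩ with hk
  have hunit : normSq i = 1 ∧ normSq j = 1 ∧ normSq k = 1 := by
    refine ⟨?_, ?_, ?_⟩ <;> rw [normSq_def'] <;> norm_num [i, j, k]
  rw [dir2_SRkernel h (map_one normSq), dir2_SRkernel h hunit.1, dir2_SRkernel h hunit.2.1,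
    dir2_SRkernel h hunit.2.2]
  exact sum_four_directions_eq (mul_inv_cancel₀ h) (sum_sliceQuadraticLin_sq s x i j k hi hj hk)
    (sum_sliceQuadraticLin_mul_star s x i j k hi hj hk)
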